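/- Let W be an SW-deterministic, aperiodic Wang tile set and T = T(W) the associated automaton. If W admits a ℤ²-tiling, then there exists an ω-word ξ over the color alphabet whose orbit under the automaton action is infinite. -/

import Mathlib

/-- A Wang tile over a set of colors `C`. -/
structure WangTile (C : Type*) where
  west : C
  south : C
  east : C
  north : C
deriving DecidableEq

variable {C : Type*}

/-- `f` is a valid tiling of the discrete plane `ℤ²` by the tile set `W`. -/
def IsZTiling (W : Finset (WangTile C)) (f : ℤ × ℤ → WangTile C) : Prop :=
  ∀ x y : ℤ, f (x, y) ∈ W ∧ (f (x, y)).east = (f (x + 1, y)).west ∧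
    (f (x, y)).north = (f (x, y + 1)).south

/-- `g` is a valid tiling of the first quadrant `ℕ²` by the tile set `W`. -/
def IsNTiling (W : Finset (WangTile C)) (g : ℕ × ℕ → WangTile C) : Prop :=
  ∀ x y : ℕ, g (x, y) ∈ W ∧ (g (x, y)).east = (g (x + 1, y)).west ∧
    (g (x, y)).north = (g (x, y + 1)).south

/-- A `ℤ²`-tiling is periodic if it has a nonzero periodicity vector. -/
def PeriodicTiling (f : ℤ × ℤ → WangTile C) : Prop :=
  ∃ v : ℤ × ℤ, v ≠ 0 ∧ ∀ t : ℤ × ℤ, f (t + v) = f t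

/-- An `ℕ²`-tiling is y-recurrent if two distinct rows have the same horizontal word
(sequence of south colors). -/
def YRecurrent (g : ℕ × ℕ → WangTile C) : Prop :=
  ∃ i j : ℕ, i ≠ j ∧ ∀ x : ℕ, (g (x, i)).south = (g (x, j)).south

/-- `W` is SW-deterministic: each tile is determined by its south and west colors. -/
def SWDet (W : Finset (WangTile C)) : Prop :=
  ∀ t ∈ W, ∀ t' ∈ W, t.south = t'.south → t.west = t'.west → t = t'

/-- One step of the action of the automaton `T(W)` on ω-words: `η` is obtained from `ξ` by
applying some state, i.e. there is a right-infinite row of matching tiles of `W` whose south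
colors spell `ξ` and whose north colors spell `η`. -/
def RowStep (W : Finset (WangTile C)) (ξ η : ℕ → C) : Prop :=
  ∃ r : ℕ → WangTile C, (∀ n, r n ∈ W) ∧ (∀ n, (r n).south = ξ n) ∧
    (∀ n, (r n).north = η n) ∧ ∀ n, (r n).east = (r (n + 1)).west

/-! If every orbit were finite, the south words of the rows `y = 0, 1, 2, …` of the `ℤ²`-tiling,
which all lie in the orbit of the bottom one, would repeat: rows `i < j` carry the same word.
The strip between them admits only finitely many columns, so two columns `x₁ < x₂` agree on it.
The rectangle `[x₁, x₂) × [i, j)` then has matching opposite edges, so repeating it tiles the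
plane periodically, contradicting aperiodicity. -/

theorem toIcoMod_succ_cases {p : ℤ} (hp : 0 < p) (a b : ℤ) :
    toIcoMod hp a (b + 1) = toIcoMod hp a b + 1 ∨
      (toIcoMod hp a b = a + p - 1 ∧ toIcoMod hp a (b + 1) = a) := by
  obtain ⟨⟨hat, htp⟩, z, hb⟩ := (toIcoMod_eq_iff hp).1 (rfl : toIcoMod hp a b = _)
  rcases lt_or_eq_of_le (show toIcoMod hp a b + 1 ≤ a + p by omega) with hlt | heq
  · exact .inl <| (toIcoMod_eq_iff hp).2 ⟨⟨by omega, hlt⟩, z, by omega⟩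
  · refine .inr ⟨by omega, (toIcoMod_eq_iff hp).2 ⟨⟨le_rfl, by omega⟩, z + 1, ?_⟩⟩
    rw [add_zsmul, one_zsmul]
    omega

theorem rel_toIcoMod_succ {α : Type*} (R : α → α → Prop) (g : ℤ → α) {a b : ℤ}
    (hab : 0 < b - a) (hstep : ∀ x, a ≤ x → x + 1 < b → R (g x) (g (x + 1)))
    (hwrap : R (g (b - 1)) (g a)) (x : ℤ) :
    R (g (toIcoMod hab a x)) (g (toIcoMod hab a (x + 1))) := by
  obtain ⟨hax, hxb⟩ := toIcoMod_mem_Ico hab a x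
  rcases toIcoMod_succ_cases hab a x with hsucc | ⟨hlast, hfirst⟩
  · have hx1b := (toIcoMod_mem_Ico hab a (x + 1)).2
    rw [hsucc] at hx1b ⊢
    exact hstep _ hax (by omega)
  · rwa [hlast, hfirst, add_sub_cancel]

variable {W : Finset (WangTile C)} {f : ℤ × ℤ → WangTile C}

theorem exists_periodic_isZTiling_of_rectangle (hf : IsZTiling W f) {x₁ x₂ y₁ y₂ : ℤ}
    (hx : 0 < x₂ - x₁) (hy : 0 < y₂ - y₁)
    (hcol : ∀ y ∈ Set.Ico y₁ y₂, f (x₁, y) = f (x₂, y))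
    (hrow : ∀ x ∈ Set.Ico x₁ x₂, (f (x, y₁)).south = (f (x, y₂)).south) :
    ∃ g, IsZTiling W g ∧ PeriodicTiling g := by
  have hmemx (x : ℤ) : toIcoMod hx x₁ x ∈ Set.Ico x₁ x₂ := by
    simpa using toIcoMod_mem_Ico hx x₁ x
  have hmemy (y : ℤ) : toIcoMod hy y₁ y ∈ Set.Ico y₁ y₂ := by
    simpa using toIcoMod_mem_Ico hy y₁ y
  refine ⟨fun t => f (toIcoMod hx x₁ t.1, toIcoMod hy y₁ t.2), fun x y => ⟨(hf _ _).1, ?_, ?_⟩,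
    ⟨(x₂ - x₁, 0), by simp [hx.ne'], fun t => by simp [toIcoMod_add_right]⟩⟩
  · refine rel_toIcoMod_succ (fun s t => s.east = t.west) (fun x => f (x, toIcoMod hy y₁ y)) hx
      (fun x _ _ => (hf _ _).2.1) ?_ x
    rw [(hf _ _).2.1, sub_add_cancel, hcol _ (hmemy y)]
  · refine rel_toIcoMod_succ (fun s t => s.north = t.south) (fun y => f (toIcoMod hx x₁ x, y)) hy
      (fun y _ _ => (hf _ _).2.2) ?_ y
    rw [(hf _ _).2.2, sub_add_cancel, hrow _ (hmemx x)]

theorem exists_lt_columns_eq (hf : IsZTiling W f) (y₁ y₂ : ℤ) :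
    ∃ x₁ x₂ : ℕ, x₁ < x₂ ∧ ∀ y ∈ Set.Ico y₁ y₂, f (x₁, y) = f (x₂, y) := by
  let column (x : ℕ) : Set.Ico y₁ y₂ → W := fun y => ⟨f (x, y), (hf _ _).1⟩
  obtain ⟨x₁, x₂, hlt, heq⟩ :=
    Set.finite_univ.exists_lt_map_eq_of_forall_mem (f := column) fun _ => Set.mem_univ _
  exact ⟨x₁, x₂, hlt, fun y hy => congrArg Subtype.val (congrFun heq ⟨y, hy⟩)⟩

theorem exists_periodic_isZTiling_of_rows_eq (hf : IsZTiling W f) {y₁ y₂ : ℤ} (hy : y₁ < y₂)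
    (hrow : ∀ x : ℕ, (f (x, y₁)).south = (f (x, y₂)).south) :
    ∃ g, IsZTiling W g ∧ PeriodicTiling g := by
  obtain ⟨x₁, x₂, hx, hcol⟩ := exists_lt_columns_eq hf y₁ y₂
  refine exists_periodic_isZTiling_of_rectangle hf (by omega) (by omega) hcol fun x hx => ?_
  lift x to ℕ using (Nat.cast_nonneg x₁).trans hx.1
  exact hrow x

theorem rowStep_of_isZTiling (hf : IsZTiling W f) (y : ℤ) :
    RowStep W (fun n : ℕ => (f (n, y)).south) (fun n : ℕ => (f (n, y + 1)).south) :=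
  ⟨fun n => f (n, y), fun n => (hf _ _).1, fun _ => rfl, fun n => (hf _ _).2.2,
    fun n => by simpa using (hf n y).2.1⟩

theorem reflTransGen_rowStep_of_isZTiling (hf : IsZTiling W f) (y : ℤ) (k : ℕ) :
    Relation.ReflTransGen (RowStep W) (fun n : ℕ => (f (n, y)).south)
      (fun n : ℕ => (f (n, y + k)).south) := by
  induction k with
  | zero => simpa using Relation.ReflTransGen.refl
  | succ k ih => simpa [add_assoc] using ih.tail (rowStep_of_isZTiling hf (y + k))

theorem stmt13_general (W : Finset (WangTile C))
    (haper : ∀ f : ℤ × ℤ → WangTile C, IsZTiling W f → ¬ PeriodicTiling f)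
    (f : ℤ × ℤ → WangTile C) (hf : IsZTiling W f) :
    ∃ ξ : ℕ → C, {η | Relation.ReflTransGen (RowStep W) ξ η}.Infinite := by
  by_contra! hfin
  obtain ⟨i, j, hij, hrow⟩ := (hfin _).exists_lt_map_eq_of_forall_mem
    (reflTransGen_rowStep_of_isZTiling hf 0)
  obtain ⟨g, hg, hper⟩ := exists_periodic_isZTiling_of_rows_eq hf (Nat.cast_lt.2 hij : (i : ℤ) < j)
    fun x => by simpa using congrFun hrow x
  exact haper g hg hper

/-- If an SW-deterministic, aperiodic Wang tile set admits a `ℤ²`-tiling, then some ω-word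
over the colors has an infinite orbit under the action of the associated automaton. -/
theorem stmt13 (W : Finset (WangTile C)) (hsw : SWDet W)
    (haper : ∀ f : ℤ × ℤ → WangTile C, IsZTiling W f → ¬ PeriodicTiling f)
    (f : ℤ × ℤ → WangTile C) (hf : IsZTiling W f) :
    ∃ ξ : ℕ → C, {η | Relation.ReflTransGen (RowStep W) ξ η}.Infinite :=
  stmt13_general W haper f hf
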